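/- arXiv:2212.06404 — 6 statements merged into one kernel-verified Lean document; each statement's English description precedes it below -/
import Mathlib

section
/- Let K be a field and let a_0(S), a_1(S), b_01(S), b_10(S), c_01(S), c_10(S) and a_0(T), a_1(T), b_01(T), b_10(T), c_01(T), c_10(T) be nonzero elements of K. Define Δ_01(x) = (a_0(x)a_1(x) + b_01(x)b_10(x) - c_01(x)c_10(x)) / (a_0(x)b_01(x)) for x ∈ {S,T}. Then the system of seven equations Y_1 = Y_2 = Y_3 = Y_4 = Y_5 = Y_6 = Y_7 = 0 (as defined in the context) has a solution (A_0, A_1, B_01, B_10, C_01, C_10) ∈ K^6 with C_01 ≠ 0 if and only if Δ_01(S) = Δ_01(T). -/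
/-!
Four of the seven equations (Y₂, Y₃, Y₅, Y₆) combine linearly, with weight-polynomial coefficients,
into `C₀₁ · (Δ₀₁(S) - Δ₀₁(T)) · a₀(S) b₀₁(S) a₀(T) b₀₁(T) = 0`, so a solution with `C₀₁ ≠ 0` forces
`Δ₀₁(S) = Δ₀₁(T)`. Conversely the system is linear in the unknowns: once `C₀₁` is fixed, Y₄, Y₆ and Y₅
determine `C₁₀`, `B₀₁` and `B₁₀`, Y₃ and Y₇ determine `A₀` and `A₁`, Y₁ then holds identically, and the
remaining equation Y₂ is exactly the cross-multiplied identity `Δ₀₁(S) = Δ₀₁(T)`.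
-/

structure SixVertexWeights (R : Type*) where
  a0 : R
  a1 : R
  b01 : R
  b10 : R
  c01 : R
  c10 : R

namespace SixVertexWeights

variable {R : Type*}

section CommRing

variable [CommRing R]

def deltaNum (w : SixVertexWeights R) : R :=
  w.a0 * w.a1 + w.b01 * w.b10 - w.c01 * w.c10

/-- The Yang–Baxter equations `Y₁ = ⋯ = Y₇ = 0` for the unknown weights `A₀, …, C₁₀`. -/
def IsYangBaxterSolution (S T : SixVertexWeights R) (A0 A1 B01 B10 C01 C10 : R) : Prop :=
  A0 * S.b01 * T.c01 - B01 * S.a0 * T.c01 - C10 * T.b01 * S.c01 = 0 ∧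
  A0 * T.a0 * S.c01 - B10 * T.b01 * S.c01 - C01 * S.a0 * T.c01 = 0 ∧
  B01 * S.a0 * T.c10 + C01 * T.b01 * S.c10 - A0 * S.b01 * T.c10 = 0 ∧
  C01 * T.c01 * S.c10 - C10 * S.c01 * T.c10 = 0 ∧
  C01 * T.a0 * S.b10 - B10 * S.c01 * T.c10 - C01 * S.a0 * T.b10 = 0 ∧
  B01 * S.c01 * T.c10 + C01 * S.a1 * T.b01 - C01 * T.a1 * S.b01 = 0 ∧
  B01 * T.b10 * S.c01 + C01 * S.a1 * T.c01 - A1 * T.a1 * S.c01 = 0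

theorem IsYangBaxterSolution.mul_deltaNum_cross_eq_zero {S T : SixVertexWeights R}
    {A0 A1 B01 B10 C01 C10 : R} (h : IsYangBaxterSolution S T A0 A1 B01 B10 C01 C10) :
    C01 * (S.deltaNum * (T.a0 * T.b01) - T.deltaNum * (S.a0 * S.b01)) = 0 := by
  obtain ⟨-, h2, h3, -, h5, h6, -⟩ := h
  unfold deltaNum
  linear_combination (-(S.b01 * T.c10)) * h2 + (-(T.a0 * S.c01)) * h3 +
    (S.b01 * T.b01) * h5 + (S.a0 * T.a0) * h6

/-- The normalisation `C₀₁ = a₁(T) b₀₁(S) c₀₁(S) c₁₀(T)` clears every denominator of the solved system. -/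
theorem isYangBaxterSolution_of_deltaNum_cross_eq {S T : SixVertexWeights R}
    (h : S.deltaNum * (T.a0 * T.b01) = T.deltaNum * (S.a0 * S.b01)) :
    IsYangBaxterSolution S T
      (T.a1 * (S.a0 * (T.a1 * S.b01 - S.a1 * T.b01) + T.b01 * S.c01 * S.c10))
      (S.b01 * ((T.a1 * S.b01 - S.a1 * T.b01) * T.b10 + S.a1 * T.c01 * T.c10))
      (T.a1 * S.b01 * (T.a1 * S.b01 - S.a1 * T.b01))
      (T.a1 * S.b01 * (T.a0 * S.b10 - S.a0 * T.b10))
      (T.a1 * S.b01 * S.c01 * T.c10)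
      (T.a1 * S.b01 * T.c01 * S.c10) := by
  unfold deltaNum at h
  refine ⟨by ring, ?_, by ring, by ring, by ring, by ring, by ring⟩
  linear_combination (-(T.a1 * S.c01)) * h

end CommRing

section Field

variable [Field R]

def delta (w : SixVertexWeights R) : R :=
  w.deltaNum / (w.a0 * w.b01)

theorem exists_isYangBaxterSolution_iff_delta_eq {S T : SixVertexWeights R}
    (hSa0 : S.a0 ≠ 0) (hSb01 : S.b01 ≠ 0) (hSc01 : S.c01 ≠ 0)
    (hTa0 : T.a0 ≠ 0) (hTa1 : T.a1 ≠ 0) (hTb01 : T.b01 ≠ 0) (hTc10 : T.c10 ≠ 0) :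
    (∃ A0 A1 B01 B10 C01 C10 : R, C01 ≠ 0 ∧ IsYangBaxterSolution S T A0 A1 B01 B10 C01 C10) ↔
      S.delta = T.delta := by
  rw [delta, delta, div_eq_div_iff (mul_ne_zero hSa0 hSb01) (mul_ne_zero hTa0 hTb01)]
  constructor
  · rintro ⟨A0, A1, B01, B10, C01, C10, hC01, h⟩
    exact sub_eq_zero.mp ((mul_eq_zero.mp h.mul_deltaNum_cross_eq_zero).resolve_left hC01)
  · intro h
    exact ⟨_, _, _, _, _, _, by positivity, isYangBaxterSolution_of_deltaNum_cross_eq h⟩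

end Field

end SixVertexWeights

theorem stmt0_general {K : Type*} [Field K]
    (a0S a1S b01S b10S c01S c10S a0T a1T b01T b10T c01T c10T : K)
    (ha0S : a0S ≠ 0) (hb01S : b01S ≠ 0) (hc01S : c01S ≠ 0)
    (ha0T : a0T ≠ 0) (ha1T : a1T ≠ 0) (hb01T : b01T ≠ 0) (hc10T : c10T ≠ 0) :
    (∃ A0 A1 B01 B10 C01 C10 : K, C01 ≠ 0 ∧
      A0 * b01S * c01T - B01 * a0S * c01T - C10 * b01T * c01S = 0 ∧
      A0 * a0T * c01S - B10 * b01T * c01S - C01 * a0S * c01T = 0 ∧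
      B01 * a0S * c10T + C01 * b01T * c10S - A0 * b01S * c10T = 0 ∧
      C01 * c01T * c10S - C10 * c01S * c10T = 0 ∧
      C01 * a0T * b10S - B10 * c01S * c10T - C01 * a0S * b10T = 0 ∧
      B01 * c01S * c10T + C01 * a1S * b01T - C01 * a1T * b01S = 0 ∧
      B01 * b10T * c01S + C01 * a1S * c01T - A1 * a1T * c01S = 0) ↔
    (a0S * a1S + b01S * b10S - c01S * c10S) / (a0S * b01S) =
      (a0T * a1T + b01T * b10T - c01T * c10T) / (a0T * b01T) :=
  SixVertexWeights.exists_isYangBaxterSolution_iff_delta_eq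
    (S := ⟨a0S, a1S, b01S, b10S, c01S, c10S⟩) (T := ⟨a0T, a1T, b01T, b10T, c01T, c10T⟩)
    ha0S hb01S hc01S ha0T ha1T hb01T hc10T

/-- Baxter's Δ condition for solvability of the two-color (six-vertex) model. -/
theorem stmt0 {K : Type*} [Field K]
    (a0S a1S b01S b10S c01S c10S a0T a1T b01T b10T c01T c10T : K)
    (ha0S : a0S ≠ 0) (ha1S : a1S ≠ 0) (hb01S : b01S ≠ 0) (hb10S : b10S ≠ 0)
    (hc01S : c01S ≠ 0) (hc10S : c10S ≠ 0)
    (ha0T : a0T ≠ 0) (ha1T : a1T ≠ 0) (hb01T : b01T ≠ 0) (hb10T : b10T ≠ 0)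
    (hc01T : c01T ≠ 0) (hc10T : c10T ≠ 0) :
    (∃ A0 A1 B01 B10 C01 C10 : K, C01 ≠ 0 ∧
      A0 * b01S * c01T - B01 * a0S * c01T - C10 * b01T * c01S = 0 ∧
      A0 * a0T * c01S - B10 * b01T * c01S - C01 * a0S * c01T = 0 ∧
      B01 * a0S * c10T + C01 * b01T * c10S - A0 * b01S * c10T = 0 ∧
      C01 * c01T * c10S - C10 * c01S * c10T = 0 ∧
      C01 * a0T * b10S - B10 * c01S * c10T - C01 * a0S * b10T = 0 ∧
      B01 * c01S * c10T + C01 * a1S * b01T - C01 * a1T * b01S = 0 ∧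
      B01 * b10T * c01S + C01 * a1S * c01T - A1 * a1T * c01S = 0) ↔
    (a0S * a1S + b01S * b10S - c01S * c10S) / (a0S * b01S) =
      (a0T * a1T + b01T * b10T - c01T * c10T) / (a0T * b01T) :=
  stmt0_general a0S a1S b01S b10S c01S c10S a0T a1T b01T b10T c01T c10T ha0S hb01S hc01S ha0T ha1T
    hb01T hc10T
end

section
/- Let K be a field with nonzero weights a_i(x), b_ij(x), c_ij(x) ∈ K^× for distinct i,j ∈ {0,...,n-1}, x ∈ {S,T}. Suppose Δ_01(S) = Δ_01(T) and Δ_10(S) = Δ_10(T). Then, fixing any nonzero C_01 ∈ K^×, the tuple defined by A_0 = α_01 C_01, A_1 = α_10 τ_01 C_01, B_01 = β_01 C_01, B_10 = β_10 τ_01 C_01, C_10 = τ_01 C_01 satisfies all fourteen two-color Yang–Baxter polynomial equations Y_m(0,1) = 0 and Y_m(1,0) = 0 for 1 ≤ m ≤ 7. -/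
/-!
Put `C_ji = τ_ij C_ij`. Then `Y₄`, `Y₆` and `Y₃` are linear equations for `C_ji`, `B_ij` and `A_i`
whose solutions are exactly the definitions of `τ_ij`, `β_ij` and `α_ij`. Up to nonzero factors and
modulo `Y₄`, the equations `Y₁(i,j)`, `Y₅(i,j)`, `Y₇(i,j)` are `Y₃(i,j)`, `Y₆(j,i)`, `Y₂(j,i)`, so
only `Y₂(i,j)` and `Y₂(j,i)` carry a condition, and after clearing denominators `Y₂(i,j)` is
`Δ_ij(S) = Δ_ij(T)`. Finally, the parametrization is symmetric under `i ↔ j` because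
`τ_ji τ_ij = 1`, so the equations for `(j,i)` are those for `(i,j)` with the colors exchanged.
-/

/-- The data attached to an ordered pair of colors `(i, j)`: either the weights
`a_i(x), a_j(x), b_ij(x), b_ji(x), c_ij(x), c_ji(x)` at one spectral point `x`, or the unknowns
`A_i, A_j, B_ij, B_ji, C_ij, C_ji`. -/
@[ext]
structure TwoColorWeights (K : Type*) where
  ai : K
  aj : K
  bij : K
  bji : K
  cij : K
  cji : K

namespace TwoColorWeights

variable {K : Type*}

@[simps]
def swap (x : TwoColorWeights K) : TwoColorWeights K :=
  ⟨x.aj, x.ai, x.bji, x.bij, x.cji, x.cij⟩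

@[simp]
theorem swap_swap (x : TwoColorWeights K) : x.swap.swap = x := rfl

structure AllNeZero [Zero K] (x : TwoColorWeights K) : Prop where
  ai : x.ai ≠ 0
  aj : x.aj ≠ 0
  bij : x.bij ≠ 0
  bji : x.bji ≠ 0
  cij : x.cij ≠ 0
  cji : x.cji ≠ 0

theorem AllNeZero.swap [Zero K] {x : TwoColorWeights K} (hx : x.AllNeZero) : x.swap.AllNeZero :=
  ⟨hx.aj, hx.ai, hx.bji, hx.bij, hx.cji, hx.cij⟩

section Polynomials

variable [CommRing K] (X S T : TwoColorWeights K)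

def Y₁ : K := X.ai * S.bij * T.cij - X.bij * S.ai * T.cij - X.cji * T.bij * S.cij

def Y₂ : K := X.ai * T.ai * S.cij - X.bji * T.bij * S.cij - X.cij * S.ai * T.cij

def Y₃ : K := X.bij * S.ai * T.cji + X.cij * T.bij * S.cji - X.ai * S.bij * T.cji

def Y₄ : K := X.cij * T.cij * S.cji - X.cji * S.cij * T.cji

def Y₅ : K := X.cij * T.ai * S.bji - X.bji * S.cij * T.cji - X.cij * S.ai * T.bji

def Y₆ : K := X.bij * S.cij * T.cji + X.cij * S.aj * T.bij - X.cij * T.aj * S.bij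

def Y₇ : K := X.bij * T.bji * S.cij + X.cij * S.aj * T.cij - X.aj * T.aj * S.cij

def YangBaxter : Prop :=
  Y₁ X S T = 0 ∧ Y₂ X S T = 0 ∧ Y₃ X S T = 0 ∧ Y₄ X S T = 0 ∧ Y₅ X S T = 0 ∧
    Y₆ X S T = 0 ∧ Y₇ X S T = 0

theorem cji_mul_Y₁ : T.cji * Y₁ X S T = T.bij * Y₄ X S T - T.cij * Y₃ X S T := by
  unfold Y₁ Y₃ Y₄; ring

theorem cji_mul_Y₇ : S.cji * Y₇ X S T = S.aj * Y₄ X S T - S.cij * Y₂ X.swap S.swap T.swap := by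
  unfold Y₂ Y₄ Y₇ swap; ring

theorem mul_Y₅ : T.cij * S.cji * Y₅ X S T =
    (T.ai * S.bji - S.ai * T.bji) * Y₄ X S T - S.cij * T.cji * Y₆ X.swap S.swap T.swap := by
  unfold Y₄ Y₅ Y₆ swap; ring

end Polynomials

theorem yangBaxter_of_Y₂_Y₃_Y₄_Y₆ [Field K] {X S T : TwoColorWeights K} (hSji : S.cji ≠ 0)
    (hTij : T.cij ≠ 0) (hTji : T.cji ≠ 0) (h₂ : Y₂ X S T = 0) (h₃ : Y₃ X S T = 0)
    (h₄ : Y₄ X S T = 0) (h₆ : Y₆ X S T = 0) (h₂' : Y₂ X.swap S.swap T.swap = 0)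
    (h₆' : Y₆ X.swap S.swap T.swap = 0) : YangBaxter X S T := by
  refine ⟨?_, h₂, h₃, h₄, ?_, h₆, ?_⟩
  · have := cji_mul_Y₁ X S T
    rw [h₃, h₄] at this
    simpa [hTji] using this
  · have := mul_Y₅ X S T
    rw [h₄, h₆'] at this
    simpa [hTij, hSji] using this
  · have := cji_mul_Y₇ X S T
    rw [h₂', h₄] at this
    simpa [hSji] using this

section Solution

variable [Field K] {S T : TwoColorWeights K}

def Δ (x : TwoColorWeights K) : K := (x.ai * x.aj + x.bij * x.bji - x.cij * x.cji) / (x.ai * x.bij)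

variable (S T)

def τ : K := T.cij * S.cji / (S.cij * T.cji)

def β : K := (T.aj * S.bij - S.aj * T.bij) / (S.cij * T.cji)

def α : K := (β S T * S.ai * T.cji + T.bij * S.cji) / (S.bij * T.cji)

def solution (C : K) : TwoColorWeights K :=
  ⟨α S T * C, α S.swap T.swap * τ S T * C, β S T * C, β S.swap T.swap * τ S T * C, C, τ S T * C⟩

variable {S T} (C : K)

theorem τ_swap_mul_τ (hS : S.AllNeZero) (hT : T.AllNeZero) : τ S.swap T.swap * τ S T = 1 := by
  have := hS.cij; have := hS.cji; have := hT.cij; have := hT.cji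
  unfold τ swap; field_simp

theorem solution_swap (hS : S.AllNeZero) (hT : T.AllNeZero) :
    solution S.swap T.swap (τ S T * C) = (solution S T C).swap := by
  have h := τ_swap_mul_τ hS hT
  ext <;> simp only [solution, swap_ai, swap_aj, swap_bij, swap_bji, swap_cij, swap_cji, swap_swap]
    <;> grind

theorem Y₂_solution (hS : S.AllNeZero) (hT : T.AllNeZero) (hΔ : Δ S = Δ T) :
    Y₂ (solution S T C) S T = 0 := by
  have := hS.ai; have := hS.bij; have := hS.cij; have := hS.cji
  have := hT.ai; have := hT.bij; have := hT.cij; have := hT.cji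
  unfold Δ at hΔ
  unfold Y₂ solution α β τ
  simp only [swap_aj, swap_bij, swap_cij, swap_cji]
  field_simp at hΔ ⊢
  linear_combination (-C) * hΔ

theorem Y₃_solution (hS : S.bij ≠ 0) (hT : T.cji ≠ 0) : Y₃ (solution S T C) S T = 0 := by
  unfold Y₃ solution α; field_simp; ring

theorem Y₄_solution (hS : S.cij ≠ 0) (hT : T.cji ≠ 0) : Y₄ (solution S T C) S T = 0 := by
  unfold Y₄ solution τ; field_simp; ring

theorem Y₆_solution (hS : S.cij ≠ 0) (hT : T.cji ≠ 0) : Y₆ (solution S T C) S T = 0 := by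
  unfold Y₆ solution β; field_simp; ring

theorem yangBaxter_solution (hS : S.AllNeZero) (hT : T.AllNeZero) (hΔ : Δ S = Δ T)
    (hΔ' : Δ S.swap = Δ T.swap) : YangBaxter (solution S T C) S T := by
  have swapped {m : TwoColorWeights K → TwoColorWeights K → TwoColorWeights K → K}
      (h : m (solution S.swap T.swap (τ S T * C)) S.swap T.swap = 0) :
      m (solution S T C).swap S.swap T.swap = 0 := solution_swap C hS hT ▸ h
  exact yangBaxter_of_Y₂_Y₃_Y₄_Y₆ hS.cji hT.cij hT.cji (Y₂_solution C hS hT hΔ)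
    (Y₃_solution C hS.bij hT.cji) (Y₄_solution C hS.cij hT.cji) (Y₆_solution C hS.cij hT.cji)
    (swapped (Y₂_solution _ hS.swap hT.swap hΔ')) (swapped (Y₆_solution _ hS.cji hT.cij))

theorem yangBaxter_swap_solution (hS : S.AllNeZero) (hT : T.AllNeZero) (hΔ : Δ S = Δ T)
    (hΔ' : Δ S.swap = Δ T.swap) : YangBaxter (solution S T C).swap S.swap T.swap :=
  solution_swap C hS hT ▸ yangBaxter_solution _ hS.swap hT.swap hΔ' hΔ

end Solution

end TwoColorWeights

theorem stmt4_general {K : Type*} [Field K]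
    (a0S a1S b01S b10S c01S c10S a0T a1T b01T b10T c01T c10T : K)
    (ha0S : a0S ≠ 0) (ha1S : a1S ≠ 0) (hb01S : b01S ≠ 0) (hb10S : b10S ≠ 0)
    (hc01S : c01S ≠ 0) (hc10S : c10S ≠ 0)
    (ha0T : a0T ≠ 0) (ha1T : a1T ≠ 0) (hb01T : b01T ≠ 0) (hb10T : b10T ≠ 0)
    (hc01T : c01T ≠ 0) (hc10T : c10T ≠ 0)
    (hΔ01 : (a0S * a1S + b01S * b10S - c01S * c10S) / (a0S * b01S) =
            (a0T * a1T + b01T * b10T - c01T * c10T) / (a0T * b01T))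
    (hΔ10 : (a1S * a0S + b10S * b01S - c10S * c01S) / (a1S * b10S) =
            (a1T * a0T + b10T * b01T - c10T * c01T) / (a1T * b10T))
    (τ01 β01 β10 α01 α10 : K)
    (hτ01 : τ01 = c01T * c10S / (c01S * c10T))
    (hβ01 : β01 = (a1T * b01S - a1S * b01T) / (c01S * c10T))
    (hβ10 : β10 = (a0T * b10S - a0S * b10T) / (c10S * c01T))
    (hα01 : α01 = (β01 * a0S * c10T + b01T * c10S) / (b01S * c10T))
    (hα10 : α10 = (β10 * a1S * c01T + b10T * c01S) / (b10S * c01T))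
    (C01 : K)
    (A0 A1 B01 B10 C10 : K)
    (hA0 : A0 = α01 * C01) (hA1 : A1 = α10 * τ01 * C01)
    (hB01 : B01 = β01 * C01) (hB10 : B10 = β10 * τ01 * C01)
    (hC10 : C10 = τ01 * C01) :
    -- Y_m(0,1) = 0 for m = 1,...,7
    (A0 * b01S * c01T - B01 * a0S * c01T - C10 * b01T * c01S = 0 ∧
     A0 * a0T * c01S - B10 * b01T * c01S - C01 * a0S * c01T = 0 ∧
     B01 * a0S * c10T + C01 * b01T * c10S - A0 * b01S * c10T = 0 ∧
     C01 * c01T * c10S - C10 * c01S * c10T = 0 ∧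
     C01 * a0T * b10S - B10 * c01S * c10T - C01 * a0S * b10T = 0 ∧
     B01 * c01S * c10T + C01 * a1S * b01T - C01 * a1T * b01S = 0 ∧
     B01 * b10T * c01S + C01 * a1S * c01T - A1 * a1T * c01S = 0) ∧
    -- Y_m(1,0) = 0 for m = 1,...,7
    (A1 * b10S * c10T - B10 * a1S * c10T - C01 * b10T * c10S = 0 ∧
     A1 * a1T * c10S - B01 * b10T * c10S - C10 * a1S * c10T = 0 ∧
     B10 * a1S * c01T + C10 * b10T * c01S - A1 * b10S * c01T = 0 ∧
     C10 * c10T * c01S - C01 * c10S * c01T = 0 ∧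
     C10 * a1T * b01S - B01 * c10S * c01T - C10 * a1S * b01T = 0 ∧
     B10 * c10S * c01T + C10 * a0S * b10T - C10 * a0T * b10S = 0 ∧
     B10 * b01T * c10S + C10 * a0S * c10T - A0 * a0T * c10S = 0) := by
  subst hA0 hA1 hB01 hB10 hC10 hα01 hα10 hβ01 hβ10 hτ01
  let S : TwoColorWeights K := ⟨a0S, a1S, b01S, b10S, c01S, c10S⟩
  let T : TwoColorWeights K := ⟨a0T, a1T, b01T, b10T, c01T, c10T⟩
  have hS : S.AllNeZero := ⟨ha0S, ha1S, hb01S, hb10S, hc01S, hc10S⟩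
  have hT : T.AllNeZero := ⟨ha0T, ha1T, hb01T, hb10T, hc01T, hc10T⟩
  have hij := TwoColorWeights.yangBaxter_solution C01 hS hT hΔ01 hΔ10
  have hji := TwoColorWeights.yangBaxter_swap_solution C01 hS hT hΔ01 hΔ10
  exact ⟨hij, hji⟩

/-- Under Δ01(S)=Δ01(T) and Δ10(S)=Δ10(T), the parametrized tuple solves all
fourteen two-color Yang–Baxter polynomial equations. -/
theorem stmt4 {K : Type*} [Field K]
    (a0S a1S b01S b10S c01S c10S a0T a1T b01T b10T c01T c10T : K)
    (ha0S : a0S ≠ 0) (ha1S : a1S ≠ 0) (hb01S : b01S ≠ 0) (hb10S : b10S ≠ 0)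
    (hc01S : c01S ≠ 0) (hc10S : c10S ≠ 0)
    (ha0T : a0T ≠ 0) (ha1T : a1T ≠ 0) (hb01T : b01T ≠ 0) (hb10T : b10T ≠ 0)
    (hc01T : c01T ≠ 0) (hc10T : c10T ≠ 0)
    (hΔ01 : (a0S * a1S + b01S * b10S - c01S * c10S) / (a0S * b01S) =
            (a0T * a1T + b01T * b10T - c01T * c10T) / (a0T * b01T))
    (hΔ10 : (a1S * a0S + b10S * b01S - c10S * c01S) / (a1S * b10S) =
            (a1T * a0T + b10T * b01T - c10T * c01T) / (a1T * b10T))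
    (τ01 β01 β10 α01 α10 : K)
    (hτ01 : τ01 = c01T * c10S / (c01S * c10T))
    (hβ01 : β01 = (a1T * b01S - a1S * b01T) / (c01S * c10T))
    (hβ10 : β10 = (a0T * b10S - a0S * b10T) / (c10S * c01T))
    (hα01 : α01 = (β01 * a0S * c10T + b01T * c10S) / (b01S * c10T))
    (hα10 : α10 = (β10 * a1S * c01T + b10T * c01S) / (b10S * c01T))
    (C01 : K) (hC01 : C01 ≠ 0)
    (A0 A1 B01 B10 C10 : K)
    (hA0 : A0 = α01 * C01) (hA1 : A1 = α10 * τ01 * C01)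
    (hB01 : B01 = β01 * C01) (hB10 : B10 = β10 * τ01 * C01)
    (hC10 : C10 = τ01 * C01) :
    -- Y_m(0,1) = 0 for m = 1,...,7
    (A0 * b01S * c01T - B01 * a0S * c01T - C10 * b01T * c01S = 0 ∧
     A0 * a0T * c01S - B10 * b01T * c01S - C01 * a0S * c01T = 0 ∧
     B01 * a0S * c10T + C01 * b01T * c10S - A0 * b01S * c10T = 0 ∧
     C01 * c01T * c10S - C10 * c01S * c10T = 0 ∧
     C01 * a0T * b10S - B10 * c01S * c10T - C01 * a0S * b10T = 0 ∧
     B01 * c01S * c10T + C01 * a1S * b01T - C01 * a1T * b01S = 0 ∧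
     B01 * b10T * c01S + C01 * a1S * c01T - A1 * a1T * c01S = 0) ∧
    -- Y_m(1,0) = 0 for m = 1,...,7
    (A1 * b10S * c10T - B10 * a1S * c10T - C01 * b10T * c10S = 0 ∧
     A1 * a1T * c10S - B01 * b10T * c10S - C10 * a1S * c10T = 0 ∧
     B10 * a1S * c01T + C10 * b10T * c01S - A1 * b10S * c01T = 0 ∧
     C10 * c10T * c01S - C01 * c10S * c01T = 0 ∧
     C10 * a1T * b01S - B01 * c10S * c01T - C10 * a1S * b01T = 0 ∧
     B10 * c10S * c01T + C10 * a0S * b10T - C10 * a0T * b10S = 0 ∧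
     B10 * b01T * c10S + C10 * a0S * c10T - A0 * a0T * c10S = 0) :=
  stmt4_general a0S a1S b01S b10S c01S c10S a0T a1T b01T b10T c01T c10T ha0S ha1S hb01S hb10S hc01S
    hc10S ha0T ha1T hb01T hb10T hc01T hc10T hΔ01 hΔ10 τ01 β01 β10 α01 α10 hτ01 hβ01 hβ10 hα01 hα10
    C01 A0 A1 B01 B10 C10 hA0 hA1 hB01 hB10 hC10
end

section
/- Let K be a field with nonzero weights for three distinct labels i, j, k and x ∈ {S,T}. Define γ_ij = b_ij(T)c_ji(S)/(b_ij(S)c_ji(T)) and α_ij, β_ij as in context. Suppose an R-weight tuple satisfies A_i = α_ij C_ij, A_i = α_ik C_ik, B_ij = β_ij C_ij, B_ik = β_ik C_ik, and the equation B_ij b_ik(S) c_jk(T) = B_ik b_ij(S) c_jk(T) (vanishing of Y_8(i,j,k)). Then γ_ij C_ij = γ_ik C_ik. -/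
/-- γ_ij C_ij = γ_ik C_ik for any solution (Lemma on γ compatibility). -/
theorem stmt5 {K : Type*} [Field K]
    (aiS ajT ajS akT akS : K)
    (bijS bijT bikS bikT : K)
    (cijS cjiT cikS ckiT cjkT : K)
    (haiS : aiS ≠ 0) (hajT : ajT ≠ 0) (hajS : ajS ≠ 0) (hakT : akT ≠ 0) (hakS : akS ≠ 0)
    (hbijS : bijS ≠ 0) (hbijT : bijT ≠ 0) (hbikS : bikS ≠ 0) (hbikT : bikT ≠ 0)
    (hcijS : cijS ≠ 0) (hcjiT : cjiT ≠ 0) (hcikS : cikS ≠ 0) (hckiT : ckiT ≠ 0)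
    (hcjkT : cjkT ≠ 0)
    (cjiS ckiS cikT cijT : K) (hcjiS : cjiS ≠ 0) (hckiS : ckiS ≠ 0)
    (hcikT : cikT ≠ 0) (hcijT : cijT ≠ 0)
    (βij βik γij γik αij αik : K)
    (hβij : βij = (ajT * bijS - ajS * bijT) / (cijS * cjiT))
    (hβik : βik = (akT * bikS - akS * bikT) / (cikS * ckiT))
    (hγij : γij = bijT * cjiS / (bijS * cjiT))
    (hγik : γik = bikT * ckiS / (bikS * ckiT))
    (hαij : αij = (βij * aiS * cjiT + bijT * cjiS) / (bijS * cjiT))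
    (hαik : αik = (βik * aiS * ckiT + bikT * ckiS) / (bikS * ckiT))
    (Ai Bij Bik Cij Cik : K)
    (h1 : Ai = αij * Cij) (h2 : Ai = αik * Cik)
    (h3 : Bij = βij * Cij) (h4 : Bik = βik * Cik)
    (hY8 : Bij * bikS * cjkT = Bik * bijS * cjkT) :
    γij * Cij = γik * Cik := by
  have hY : βij * Cij * bikS = βik * Cik * bijS := by
    have := mul_right_cancel₀ hcjkT hY8
    rw [h3, h4] at this; linear_combination this
  have hα : αij * Cij = αik * Cik := h1 ▸ h2
  have eij : αij = γij + aiS / bijS * βij := by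
    rw [hαij, hγij]; field_simp; ring
  have eik : αik = γik + aiS / bikS * βik := by
    rw [hαik, hγik]; field_simp; ring
  rw [eij, eik] at hα
  have : γij * Cij + aiS * (βij * Cij * bikS) / (bijS * bikS)
       = γik * Cik + aiS * (βik * Cik * bijS) / (bijS * bikS) := by
    field_simp at hα ⊢; linear_combination hα
  rw [hY] at this; linear_combination this
end

section
/- Let K be a field with nonzero weights for distinct labels i, j, k. Assume b_ij(T)/b_ij(S) = b_kj(T)/b_kj(S). Then γ_jk b_jk(S) c_ik(T) = τ_ij τ_jk γ_ji c_ik(S) b_jk(T) + τ_ij β_jk γ_ji c_ij(S) c_jk(T) is equivalent to β_ij = (τ_ik·(γ_ij/γ_ik) - γ_kj·(τ_ij/τ_kj)) · b_ij(S)c_kj(T)/(c_ki(S)c_ij(T)), after the relabeling used in the paper (Lemma on condition reformulation, second condition). -/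
/-!
Under `b_ij(T)/b_ij(S) = b_kj(T)/b_kj(S)`, the ratio `γ_kj/τ_kj = (b_kj(T)/b_kj(S))·(c_kj(S)/c_kj(T))`
turns `γ_kj (τ_ij/τ_kj) b_ij(S) c_kj(T)` into `τ_ij c_kj(S) b_ij(T)`. Since moreover `τ_ki τ_ik = 1`,
the condition is a linear equation in `β_ij` with the nonzero coefficient `τ_ki γ_ik c_ki(S) c_ij(T)`,
whose unique solution is the stated formula.
-/

lemma mul_div_mul_mul_div_mul_swap {K : Type*} [Field K] {a b c d : K}
    (ha : a ≠ 0) (hb : b ≠ 0) (hc : c ≠ 0) (hd : d ≠ 0) :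
    a * b / (c * d) * (d * c / (b * a)) = 1 := by
  field_simp

lemma mul_div_mul_div_mul_div_mul_right {K : Type*} [Field K] (a b c d : K) {x y : K}
    (hx : x ≠ 0) (hy : y ≠ 0) :
    a * x / (b * y) / (c * x / (d * y)) = a / b * (d / c) := by
  field_simp

lemma eq_add_mul_iff_of_mul_eq {K : Type*} [Field K] {L R u β β₀ : K} (hu : u ≠ 0)
    (hβ₀ : u * β₀ = L - R) :
    L = R + u * β ↔ β = β₀ := by
  rw [← mul_right_inj' hu (b := β), hβ₀]
  constructor <;> intro h <;> linear_combination -h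

theorem stmt8_general {K : Type*} [Field K]
    (bijS bijT bkjS bkjT : K)
    (cijT cikS cikT ckiS ckiT ckjS ckjT cjkS cjkT : K)
    (hbijS : bijS ≠ 0)
    (hcijT : cijT ≠ 0)
    (hcikS : cikS ≠ 0) (hcikT : cikT ≠ 0) (hckiS : ckiS ≠ 0) (hckiT : ckiT ≠ 0)
    (hckjT : ckjT ≠ 0) (hcjkS : cjkS ≠ 0) (hcjkT : cjkT ≠ 0)
    (βij γij γik γkj τij τik τki τkj : K)
    (hγkj : γkj = bkjT * cjkS / (bkjS * cjkT))
    (hτik : τik = cikT * ckiS / (cikS * ckiT))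
    (hτki : τki = ckiT * cikS / (ckiS * cikT))
    (hτkj : τkj = ckjT * cjkS / (ckjS * cjkT))
    (hγikne : γik ≠ 0)
    (hb : bijT / bijS = bkjT / bkjS) :
    (γij * bijS * ckjT = τki * τij * γik * ckjS * bijT + τki * βij * γik * ckiS * cijT) ↔
      βij = (τik * (γij / γik) - γkj * (τij / τkj)) * (bijS * ckjT / (ckiS * cijT)) := by
  have hτ : τki * τik = 1 := by
    rw [hτki, hτik]; exact mul_div_mul_mul_div_mul_swap hckiT hcikS hckiS hcikT
  have hρ : γkj / τkj * bijS * ckjT = ckjS * bijT := by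
    rw [hγkj, hτkj, mul_div_mul_div_mul_div_mul_right _ _ _ _ hcjkS hcjkT, ← hb]
    field_simp
  have hu : τki * γik * ckiS * cijT ≠ 0 := by
    have := left_ne_zero_of_mul_eq_one hτ
    positivity
  have hsolution : τki * γik * ckiS * cijT *
      ((τik * (γij / γik) - γkj * (τij / τkj)) * (bijS * ckjT / (ckiS * cijT))) =
      γij * bijS * ckjT - τki * τij * γik * ckjS * bijT := by
    field_simp
    linear_combination (γij * bijS * ckjT) * hτ - τki * τij * γik * hρ
  convert eq_add_mul_iff_of_mul_eq (β := βij) hu hsolution using 2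
  ring

/-- Reformulation of the second extra solvability condition in terms of β_ij. -/
theorem stmt8 {K : Type*} [Field K]
    (ajS ajT bijS bijT bkjS bkjT bikS bikT : K)
    (cijS cijT cjiS cjiT cikS cikT ckiS ckiT ckjS ckjT cjkS cjkT : K)
    (hajS : ajS ≠ 0) (hajT : ajT ≠ 0)
    (hbijS : bijS ≠ 0) (hbijT : bijT ≠ 0) (hbkjS : bkjS ≠ 0) (hbkjT : bkjT ≠ 0)
    (hbikS : bikS ≠ 0) (hbikT : bikT ≠ 0)
    (hcijS : cijS ≠ 0) (hcijT : cijT ≠ 0) (hcjiS : cjiS ≠ 0) (hcjiT : cjiT ≠ 0)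
    (hcikS : cikS ≠ 0) (hcikT : cikT ≠ 0) (hckiS : ckiS ≠ 0) (hckiT : ckiT ≠ 0)
    (hckjS : ckjS ≠ 0) (hckjT : ckjT ≠ 0) (hcjkS : cjkS ≠ 0) (hcjkT : cjkT ≠ 0)
    (βij γij γik γkj τij τik τki τkj : K)
    (hβij : βij = (ajT * bijS - ajS * bijT) / (cijS * cjiT))
    (hγij : γij = bijT * cjiS / (bijS * cjiT))
    (hγik : γik = bikT * ckiS / (bikS * ckiT))
    (hγkj : γkj = bkjT * cjkS / (bkjS * cjkT))
    (hτij : τij = cijT * cjiS / (cijS * cjiT))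
    (hτik : τik = cikT * ckiS / (cikS * ckiT))
    (hτki : τki = ckiT * cikS / (ckiS * cikT))
    (hτkj : τkj = ckjT * cjkS / (ckjS * cjkT))
    (hγikne : γik ≠ 0) (hτkjne : τkj ≠ 0)
    (hb : bijT / bijS = bkjT / bkjS) :
    (γij * bijS * ckjT = τki * τij * γik * ckjS * bijT + τki * βij * γik * ckiS * cijT) ↔
      βij = (τik * (γij / γik) - γkj * (τij / τkj)) * (bijS * ckjT / (ckiS * cijT)) :=
  stmt8_general bijS bijT bkjS bkjT cijT cikS cikT ckiS ckiT ckjS ckjT cjkS cjkT hbijS hcijT hcikS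
    hcikT hckiS hckiT hckjT hcjkS hcjkT βij γij γik γkj τij τik τki τkj hγkj hτik hτki hτkj hγikne
    hb
end

section
/- Let K be a field with nonzero weights for distinct labels i, j, k. Suppose the two conditions β_ij = (γ_ij/γ_ik - γ_kj)·b_ij(S)c_jk(T)/(c_ik(S)c_ji(T)) and β_ij = (τ_ik·γ_ij/γ_ik - γ_kj·τ_ij/τ_kj)·b_ij(S)c_kj(T)/(c_ki(S)c_ij(T)) both hold, and suppose β_ij = 0. Then γ_ij/(γ_ik γ_kj) = τ_ij/(τ_ik τ_kj), and consequently τ_ij = τ_ik · τ_kj. -/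
/-!
With `β_ij = 0` and the scaling factors nonzero, the first condition gives `γ_ij / γ_ik = γ_kj`.
Substituting this into the second one leaves `τ_ik γ_kj = γ_kj τ_ij / τ_kj`, so cancelling `γ_kj`
gives the cocycle identity `τ_ij = τ_ik τ_kj`; both ratios in the first claim are then `1`.
-/

theorem mul_div_mul_ne_zero {G₀ : Type*} [GroupWithZero G₀] {a b c d : G₀}
    (ha : a ≠ 0) (hb : b ≠ 0) (hc : c ≠ 0) (hd : d ≠ 0) :
    a * b / (c * d) ≠ 0 :=
  div_ne_zero (mul_ne_zero ha hb) (mul_ne_zero hc hd)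

theorem eq_of_sub_mul_eq_zero {R : Type*} [Ring R] [NoZeroDivisors R] {x y f : R}
    (hf : f ≠ 0) (h : (x - y) * f = 0) : x = y :=
  sub_eq_zero.mp ((mul_eq_zero_iff_right hf).mp h)

section

variable {K : Type*} [Field K]

theorem eq_mul_of_mul_div_eq {γij γik γkj τij τik τkj : K} (hγkj : γkj ≠ 0) (hτkj : τkj ≠ 0)
    (h₁ : γij / γik = γkj) (h₂ : τik * (γij / γik) = γkj * (τij / τkj)) :
    τij = τik * τkj := by
  rw [h₁, mul_comm, mul_right_inj' hγkj] at h₂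
  exact (div_eq_iff hτkj).mp h₂.symm

theorem div_mul_eq_div_mul_and_eq_mul {γij γik γkj τij τik τkj : K} (hγkj : γkj ≠ 0)
    (hτik : τik ≠ 0) (hτkj : τkj ≠ 0) (h₁ : γij / γik = γkj)
    (h₂ : τik * (γij / γik) = γkj * (τij / τkj)) :
    γij / (γik * γkj) = τij / (τik * τkj) ∧ τij = τik * τkj := by
  have hτ : τij = τik * τkj := eq_mul_of_mul_div_eq hγkj hτkj h₁ h₂
  refine ⟨?_, hτ⟩
  rw [← div_div, h₁, div_self hγkj, hτ, div_self (mul_ne_zero hτik hτkj)]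

end

theorem stmt10_general {K : Type*} [Field K]
    (bijS bkjS bkjT : K)
    (cijT cjiT cikS cikT ckiS ckiT ckjS ckjT cjkS cjkT : K)
    (hbijS : bijS ≠ 0) (hbkjS : bkjS ≠ 0) (hbkjT : bkjT ≠ 0)
    (hcijT : cijT ≠ 0) (hcjiT : cjiT ≠ 0)
    (hcikS : cikS ≠ 0) (hcikT : cikT ≠ 0) (hckiS : ckiS ≠ 0) (hckiT : ckiT ≠ 0)
    (hckjS : ckjS ≠ 0) (hckjT : ckjT ≠ 0) (hcjkS : cjkS ≠ 0) (hcjkT : cjkT ≠ 0)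
    (βij γij γik γkj τij τik τkj : K)
    (hγkj : γkj = bkjT * cjkS / (bkjS * cjkT))
    (hτik : τik = cikT * ckiS / (cikS * ckiT))
    (hτkj : τkj = ckjT * cjkS / (ckjS * cjkT))
    (hcond1 : βij = (γij / γik - γkj) * (bijS * cjkT / (cikS * cjiT)))
    (hcond2 : βij = (τik * (γij / γik) - γkj * (τij / τkj)) *
      (bijS * ckjT / (ckiS * cijT)))
    (hβ0 : βij = 0) :
    γij / (γik * γkj) = τij / (τik * τkj) ∧ τij = τik * τkj := by
  rw [hβ0] at hcond1 hcond2
  have h₁ : γij / γik = γkj :=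
    eq_of_sub_mul_eq_zero (mul_div_mul_ne_zero hbijS hcjkT hcikS hcjiT) hcond1.symm
  have h₂ : τik * (γij / γik) = γkj * (τij / τkj) :=
    eq_of_sub_mul_eq_zero (mul_div_mul_ne_zero hbijS hckjT hckiS hcijT) hcond2.symm
  exact div_mul_eq_div_mul_and_eq_mul
    (hγkj ▸ mul_div_mul_ne_zero hbkjT hcjkS hbkjS hcjkT)
    (hτik ▸ mul_div_mul_ne_zero hcikT hckiS hcikS hckiT)
    (hτkj ▸ mul_div_mul_ne_zero hckjT hcjkS hckjS hcjkT) h₁ h₂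

/-- If β_ij = 0 then γ_ij/(γ_ik γ_kj) = τ_ij/(τ_ik τ_kj), hence τ_ij = τ_ik τ_kj. -/
theorem stmt10 {K : Type*} [Field K]
    (ajS ajT bijS bijT bkjS bkjT bikS bikT : K)
    (cijS cijT cjiS cjiT cikS cikT ckiS ckiT ckjS ckjT cjkS cjkT : K)
    (hajS : ajS ≠ 0) (hajT : ajT ≠ 0)
    (hbijS : bijS ≠ 0) (hbijT : bijT ≠ 0) (hbkjS : bkjS ≠ 0) (hbkjT : bkjT ≠ 0)
    (hbikS : bikS ≠ 0) (hbikT : bikT ≠ 0)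
    (hcijS : cijS ≠ 0) (hcijT : cijT ≠ 0) (hcjiS : cjiS ≠ 0) (hcjiT : cjiT ≠ 0)
    (hcikS : cikS ≠ 0) (hcikT : cikT ≠ 0) (hckiS : ckiS ≠ 0) (hckiT : ckiT ≠ 0)
    (hckjS : ckjS ≠ 0) (hckjT : ckjT ≠ 0) (hcjkS : cjkS ≠ 0) (hcjkT : cjkT ≠ 0)
    (βij γij γik γkj τij τik τki τkj : K)
    (hβij : βij = (ajT * bijS - ajS * bijT) / (cijS * cjiT))
    (hγij : γij = bijT * cjiS / (bijS * cjiT))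
    (hγik : γik = bikT * ckiS / (bikS * ckiT))
    (hγkj : γkj = bkjT * cjkS / (bkjS * cjkT))
    (hτij : τij = cijT * cjiS / (cijS * cjiT))
    (hτik : τik = cikT * ckiS / (cikS * ckiT))
    (hτki : τki = ckiT * cikS / (ckiS * cikT))
    (hτkj : τkj = ckjT * cjkS / (ckjS * cjkT))
    (hcond1 : βij = (γij / γik - γkj) * (bijS * cjkT / (cikS * cjiT)))
    (hcond2 : βij = (τik * (γij / γik) - γkj * (τij / τkj)) *
      (bijS * ckjT / (ckiS * cijT)))
    (hβ0 : βij = 0) :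
    γij / (γik * γkj) = τij / (τik * τkj) ∧ τij = τik * τkj :=
  stmt10_general bijS bkjS bkjT cijT cjiT cikS cikT ckiS ckiT ckjS ckjT cjkS cjkT hbijS hbkjS hbkjT
    hcijT hcjiT hcikS hcikT hckiS hckiT hckjS hckjT hcjkS hcjkT βij γij γik γkj τij τik τkj hγkj
    hτik hτkj hcond1 hcond2 hβ0
end

section
/- Let K be a field with nonzero weights satisfying the n-color solvability condition b_ij(T)/b_ij(S) = b_kj(T)/b_kj(S) for all distinct labels and the compatibility β_ij γ_ik b_ik(S) = β_ik γ_ij b_ij(S) for all distinct i, j, k, and the condition β_kj γ_kl b_kl(S) = β_kl γ_kj b_kj(S). If β_ij = 0 for one pair of distinct labels (i,j), then β_kl = 0 for every pair of distinct labels (k,l). -/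
/-- If one β_ij vanishes then all β_kl vanish. -/
theorem stmt11 {K : Type*} [Field K] {L : Type*}
    (aS aT : L → K) (bS bT cS cT : L → L → K)
    (haS : ∀ i, aS i ≠ 0) (haT : ∀ i, aT i ≠ 0)
    (hbS : ∀ i j, i ≠ j → bS i j ≠ 0) (hbT : ∀ i j, i ≠ j → bT i j ≠ 0)
    (hcS : ∀ i j, i ≠ j → cS i j ≠ 0) (hcT : ∀ i j, i ≠ j → cT i j ≠ 0)
    (β γ : L → L → K)
    (hβ : ∀ i j, i ≠ j → β i j = (aT j * bS i j - aS j * bT i j) / (cS i j * cT j i))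
    (hγ : ∀ i j, i ≠ j → γ i j = bT i j * cS j i / (bS i j * cT j i))
    -- at least three labels
    (hcard : ∀ i j : L, ∃ k, k ≠ i ∧ k ≠ j)
    -- the solvability condition b_ij(T)/b_ij(S) = b_kj(T)/b_kj(S)
    (hb : ∀ i j k : L, i ≠ j → k ≠ j → i ≠ k → bT i j / bS i j = bT k j / bS k j)
    -- the compatibility condition β_ij γ_ik b_ik(S) = β_ik γ_ij b_ij(S)
    (hcompat : ∀ i j k : L, i ≠ j → i ≠ k → j ≠ k →
      β i j * γ i k * bS i k = β i k * γ i j * bS i j)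
    (i j : L) (hij : i ≠ j) (hβij : β i j = 0) :
    ∀ k l : L, k ≠ l → β k l = 0 := by
  -- criterion for β m n = 0
  have crit : ∀ m n, m ≠ n → (β m n = 0 ↔ aT n * bS m n = aS n * bT m n) := by
    intro m n hmn
    rw [hβ m n hmn, div_eq_zero_iff, sub_eq_zero]
    constructor
    · rintro (h | h)
      · exact h
      · exact absurd h (mul_ne_zero (hcS m n hmn) (hcT n m hmn.symm))
    · exact Or.inl
  -- γ is nonzero
  have hγne : ∀ m n, m ≠ n → γ m n ≠ 0 := by
    intro m n hmn
    rw [hγ m n hmn]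
    exact div_ne_zero (mul_ne_zero (hbT m n hmn) (hcS n m hmn.symm))
      (mul_ne_zero (hbS m n hmn) (hcT n m hmn.symm))
  -- transfer a zero along a column using hb
  have transfer : ∀ m p n, m ≠ n → p ≠ n → β m n = 0 → β p n = 0 := by
    intro m p n hmn hpn h0
    by_cases hmp : m = p
    · exact hmp ▸ h0
    · rw [crit m n hmn] at h0
      rw [crit p n hpn]
      have hbmn := hbS m n hmn
      have hbpn := hbS p n hpn
      have hr := hb m n p hmn hpn hmp
      rw [div_eq_div_iff hbmn hbpn] at hr
      have key : bS m n * (aT n * bS p n) = bS m n * (aS n * bT p n) := by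
        linear_combination bS p n * h0 + aS n * hr
      exact mul_left_cancel₀ hbmn key
  -- transfer a zero along a row using hcompat
  have row : ∀ m n p, m ≠ n → m ≠ p → n ≠ p → β m n = 0 → β m p = 0 := by
    intro m n p hmn hmp hnp h0
    have h := hcompat m n p hmn hmp hnp
    rw [h0, zero_mul, zero_mul] at h
    rcases mul_eq_zero.mp h.symm with h1 | h1
    · rcases mul_eq_zero.mp h1 with h2 | h2
      · exact h2
      · exact absurd h2 (hγne m n hmn)
    · exact absurd h1 (hbS m n hmn)
  intro k l hkl
  by_cases hlj : l = j
  · subst hlj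
    exact transfer i k l hij hkl hβij
  · by_cases hkj : k = j
    · subst hkj
      obtain ⟨m, hmk, hml⟩ := hcard k l
      have h1 : β m l = 0 := by
        have h2 : β m k = 0 := transfer i m k hij hmk hβij
        exact row m k l hmk hml (fun h => hlj h.symm) h2
      exact transfer m k l hml hkl h1
    · have h2 : β k j = 0 := transfer i k j hij hkj hβij
      exact row k j l hkj hkl (fun h => hlj h.symm) h2
end
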